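/- Sign assignments extend over one more cube dimension: let s⁰ and s¹ be sign assignments for C(n). Then there exists a sign assignment s for C(n+1) whose restrictions to the two codimension-one faces {v : Fin (n+1) → ZMod 2 | v 0 = 0} and {v | v 0 = 1} are s⁰ and s¹ respectively. Concretely, embedding a vertex v of C(n) into C(n+1) as Fin.cons ε v for ε ∈ ZMod 2, and the edge (v, i) of C(n) as the edge (Fin.cons ε v, Fin.succ i) of C(n+1), there exists a sign assignment s for C(n+1) such that s(Fin.cons 0 v, Fin.succ i) = s⁰(v, i) and s(Fin.cons 1 v, Fin.succ i) = s¹(v, i) for every edge (v, i) of C(n). -/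

import Mathlib

/-!
On a mixed square of `C(n+1)`, spanned by direction `0` and a direction of `C(n)`, the
sign-assignment condition says exactly that the signs `f v` of the direction-`0` edges satisfy
`f (v + e_k) = f v + s⁰(v, k) + s¹(v, k) + 1`, i.e. that `f` is a potential of the cochain
`s⁰ + s¹ + 1` of `C(n)`. That cochain is a cocycle (each of `s⁰`, `s¹`, `1` sums to `1` around
a square), and every cocycle of the cube has a potential: build one on the face `v 0 = 0` by
induction and carry it across the edges in direction `0`.
-/

section FinCons

variable {α : Type*} [AddZeroClass α] {n : ℕ}

lemma Fin.cons_add_single_zero (a : α) (v : Fin n → α) (b : α) :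
    (Fin.cons a v : Fin (n + 1) → α) + Pi.single 0 b = Fin.cons (a + b) v := by
  ext j; cases j using Fin.cases <;> simp [Fin.succ_ne_zero]

lemma Fin.cons_add_single_succ (a : α) (v : Fin n → α) (k : Fin n) (b : α) :
    (Fin.cons a v : Fin (n + 1) → α) + Pi.single k.succ b = Fin.cons a (v + Pi.single k b) := by
  ext j; cases j using Fin.cases <;> simp [Pi.single_apply, Fin.succ_ne_zero]

end FinCons

lemma ZMod.eq_zero_or_eq_one (a : ZMod 2) : a = 0 ∨ a = 1 := by
  revert a; decide

namespace Cube

variable {n : ℕ}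

def IsCocycle {A : Type*} [Add A] (g : (Fin n → ZMod 2) → Fin n → A) : Prop :=
  ∀ (v : Fin n → ZMod 2) (i j : Fin n), i ≠ j → v i = 0 → v j = 0 →
    g v i + g (v + Pi.single i 1) j = g v j + g (v + Pi.single j 1) i

def IsSignAssignment (s : (Fin n → ZMod 2) → Fin n → ZMod 2) : Prop :=
  ∀ (v : Fin n → ZMod 2) (i j : Fin n), i ≠ j → v i = 0 → v j = 0 →
    s v i + s (v + Pi.single j 1) i + s v j + s (v + Pi.single i 1) j = 1

lemma IsCocycle.comp_cons {A : Type*} [Add A] {g : (Fin (n + 1) → ZMod 2) → Fin (n + 1) → A}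
    (hg : IsCocycle g) (a : ZMod 2) : IsCocycle fun v k ↦ g (Fin.cons a v) k.succ := by
  intro v i j hij hi hj
  simpa [Fin.cons_add_single_succ] using
    hg (Fin.cons a v) i.succ j.succ (Fin.succ_injective _ |>.ne hij) (by simpa) (by simpa)

theorem IsCocycle.exists_potential {A : Type*} [AddMonoid A]
    {g : (Fin n → ZMod 2) → Fin n → A} (hg : IsCocycle g) :
    ∃ f : (Fin n → ZMod 2) → A, ∀ v i, v i = 0 → f (v + Pi.single i 1) = f v + g v i := by
  induction n with
  | zero => exact ⟨0, fun _ i ↦ i.elim0⟩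
  | succ n ih =>
    obtain ⟨f, hf⟩ := ih (hg.comp_cons 0)
    refine ⟨fun w ↦ f (Fin.tail w) + if w 0 = 0 then 0 else g (Fin.cons 0 (Fin.tail w)) 0, ?_⟩
    intro w i hi
    cases w using Fin.consCases with | cons a v => ?_
    cases i using Fin.cases with
    | zero =>
      obtain rfl : a = 0 := by simpa using hi
      simp [Fin.cons_add_single_zero]
    | succ k =>
      simp only [Fin.cons_succ] at hi
      simp only [Fin.cons_add_single_succ, Fin.tail_cons, Fin.cons_zero, hf v k hi]
      obtain rfl | rfl := a.eq_zero_or_eq_one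
      · simp
      · have square := hg (Fin.cons 0 v) k.succ 0 (Fin.succ_ne_zero k) (by simpa) rfl
        simp only [Fin.cons_add_single_succ, Fin.cons_add_single_zero, zero_add] at square
        simp [add_assoc, square]

lemma IsSignAssignment.isCocycle_add_add_one {s₀ s₁ : (Fin n → ZMod 2) → Fin n → ZMod 2}
    (h₀ : IsSignAssignment s₀) (h₁ : IsSignAssignment s₁) :
    IsCocycle fun v k ↦ s₀ v k + s₁ v k + 1 := by
  intro v i j hij hi hj
  have := h₀ v i j hij hi hj
  have := h₁ v i j hij hi hj
  grind

section Extend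

variable (t : ZMod 2 → (Fin n → ZMod 2) → Fin n → ZMod 2) (f : (Fin n → ZMod 2) → ZMod 2)

def extendCochain : (Fin (n + 1) → ZMod 2) → Fin (n + 1) → ZMod 2 :=
  fun w ↦ Fin.cases (f (Fin.tail w)) fun k ↦ t (w 0) (Fin.tail w) k

@[simp] lemma extendCochain_cons_zero (a : ZMod 2) (v : Fin n → ZMod 2) :
    extendCochain t f (Fin.cons a v) 0 = f v := by
  simp [extendCochain]

@[simp] lemma extendCochain_cons_succ (a : ZMod 2) (v : Fin n → ZMod 2) (k : Fin n) :
    extendCochain t f (Fin.cons a v) k.succ = t a v k := by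
  simp [extendCochain]

variable {t f}

theorem isSignAssignment_extendCochain (ht : ∀ a, IsSignAssignment (t a))
    (hf : ∀ v k, v k = 0 → f (v + Pi.single k 1) = f v + (t 0 v k + t 1 v k + 1)) :
    IsSignAssignment (extendCochain t f) := by
  have mixed : ∀ v l, v l = 0 → f v + f (v + Pi.single l 1) + t 0 v l + t 1 v l = 1 := by
    intro v l hl
    rw [hf v l hl]
    grind
  intro w i j hij hi hj
  cases w using Fin.consCases with | cons a v => ?_
  cases i using Fin.cases <;> cases j using Fin.cases
  case zero.zero => exact absurd rfl hij
  case zero.succ l =>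
    obtain rfl : a = 0 := by simpa using hi
    simpa [Fin.cons_add_single_zero, Fin.cons_add_single_succ] using mixed v l (by simpa using hj)
  case succ.zero k =>
    obtain rfl : a = 0 := by simpa using hj
    simp only [Fin.cons_add_single_zero, Fin.cons_add_single_succ, extendCochain_cons_zero,
      extendCochain_cons_succ, zero_add]
    linear_combination mixed v k (by simpa using hi)
  case succ.succ k l =>
    simpa [Fin.cons_add_single_succ] using
      ht a v k l (fun h ↦ hij (h ▸ rfl)) (by simpa using hi) (by simpa using hj)

end Extend

end Cube

/-- Sign assignments extend over one more cube dimension: given sign assignments `s⁰`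
and `s¹` for `C(n)`, there is a sign assignment `s` for `C(n+1)` restricting to `s⁰` on
the face `{v | v 0 = 0}` and to `s¹` on the face `{v | v 0 = 1}`, where a vertex `v` of
`C(n)` embeds into `C(n+1)` as `Fin.cons ε v` and the edge `(v, i)` as
`(Fin.cons ε v, Fin.succ i)`. -/
theorem sign_assignment_extends (n : ℕ)
    (s₀ s₁ : (Fin n → ZMod 2) → Fin n → ZMod 2)
    (hs₀ : ∀ (v : Fin n → ZMod 2) (i j : Fin n), i ≠ j → v i = 0 → v j = 0 →
      s₀ v i + s₀ (v + Pi.single j 1) i + s₀ v j + s₀ (v + Pi.single i 1) j = 1)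
    (hs₁ : ∀ (v : Fin n → ZMod 2) (i j : Fin n), i ≠ j → v i = 0 → v j = 0 →
      s₁ v i + s₁ (v + Pi.single j 1) i + s₁ v j + s₁ (v + Pi.single i 1) j = 1) :
    ∃ s : (Fin (n + 1) → ZMod 2) → Fin (n + 1) → ZMod 2,
      (∀ (v : Fin (n + 1) → ZMod 2) (i j : Fin (n + 1)), i ≠ j → v i = 0 → v j = 0 →
        s v i + s (v + Pi.single j 1) i + s v j + s (v + Pi.single i 1) j = 1) ∧
      (∀ (v : Fin n → ZMod 2) (i : Fin n), v i = 0 →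
        s (Fin.cons 0 v) i.succ = s₀ v i) ∧
      (∀ (v : Fin n → ZMod 2) (i : Fin n), v i = 0 →
        s (Fin.cons 1 v) i.succ = s₁ v i) := by
  obtain ⟨f, hf⟩ := (Cube.IsSignAssignment.isCocycle_add_add_one hs₀ hs₁).exists_potential
  let t : ZMod 2 → (Fin n → ZMod 2) → Fin n → ZMod 2 := fun a ↦ if a = 0 then s₀ else s₁
  have ht : ∀ a, Cube.IsSignAssignment (t a) := fun a ↦ by
    unfold t; split_ifs
    exacts [hs₀, hs₁]
  refine ⟨Cube.extendCochain t f,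
    Cube.isSignAssignment_extendCochain ht (by simpa [t] using hf), ?_, ?_⟩ <;> simp [t]
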